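/- arXiv:1912.13434 — 7 statements merged into one kernel-verified Lean document; each statement's English description precedes it below -/
import Mathlib

section
/- Let s ≥ 0 be a real number and let x ∈ [0,1). Define F_s(x) = 1 - 3/((√((4-x)/(1-x)) + s)² - 1). Then 0 ≤ F_s(x) < 1 and √((4 - F_s(x))/(1 - F_s(x))) = √((4-x)/(1-x)) + s. -/
/-- `Fs s x = 1 - 3/((√((4-x)/(1-x)) + s)² - 1)`. -/
noncomputable def Fs (s x : ℝ) : ℝ :=
  1 - 3 / ((Real.sqrt ((4 - x) / (1 - x)) + s) ^ 2 - 1)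

theorem stmt_0 (s x : ℝ) (hs : 0 ≤ s) (hx : x ∈ Set.Ico (0 : ℝ) 1) :
    0 ≤ Fs s x ∧ Fs s x < 1 ∧
      Real.sqrt ((4 - Fs s x) / (1 - Fs s x)) = Real.sqrt ((4 - x) / (1 - x)) + s := by
  obtain ⟨hx0, hx1⟩ := hx
  have h1x : (0:ℝ) < 1 - x := by linarith
  have hq : (4:ℝ) ≤ (4 - x) / (1 - x) := by
    rw [le_div_iff₀ h1x]; nlinarith
  set r := Real.sqrt ((4 - x) / (1 - x)) with hr_def
  have hrsq : r ^ 2 = (4 - x) / (1 - x) := Real.sq_sqrt (by linarith)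
  have hr2 : (2:ℝ) ≤ r := by
    have h4 : Real.sqrt 4 = 2 := by
      rw [show (4:ℝ) = 2 ^ 2 by norm_num, Real.sqrt_sq (by norm_num : (0:ℝ) ≤ 2)]
    calc (2:ℝ) = Real.sqrt 4 := h4.symm
      _ ≤ r := Real.sqrt_le_sqrt hq
  set t := r + s with ht_def
  have ht2 : (2:ℝ) ≤ t := by linarith
  have hd : (3:ℝ) ≤ t ^ 2 - 1 := by nlinarith
  have hdpos : (0:ℝ) < t ^ 2 - 1 := by linarith
  have hFs : Fs s x = 1 - 3 / (t ^ 2 - 1) := rfl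
  have hFle : 3 / (t ^ 2 - 1) ≤ 1 := by
    rw [div_le_one hdpos]; linarith
  have hFpos : 0 < 3 / (t ^ 2 - 1) := by positivity
  refine ⟨by rw [hFs]; linarith, by rw [hFs]; linarith, ?_⟩
  have hratio : (4 - Fs s x) / (1 - Fs s x) = t ^ 2 := by
    rw [hFs]; field_simp; ring
  rw [hratio, Real.sqrt_sq (by linarith : (0:ℝ) ≤ t)]
end

section
/- Let s, t ≥ 0 be real numbers and let x ∈ [0,1). Define F_s(x) = 1 - 3/((√((4-x)/(1-x)) + s)² - 1), and similarly F_t and F_{s+t}. Then F_s(x) ∈ [0,1) and F_t(F_s(x)) = F_{s+t}(x). -/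
theorem stmt_1 (s t x : ℝ) (hs : 0 ≤ s) (ht : 0 ≤ t) (hx : x ∈ Set.Ico (0 : ℝ) 1) :
    Fs s x ∈ Set.Ico (0 : ℝ) 1 ∧ Fs t (Fs s x) = Fs (s + t) x := by
  obtain ⟨hx0, hx1⟩ := hx
  have h1x : (0:ℝ) < 1 - x := by linarith
  set u := Real.sqrt ((4 - x) / (1 - x)) with hu
  have h4 : (4:ℝ) ≤ (4 - x) / (1 - x) := by
    rw [le_div_iff₀ h1x]; linarith
  have hu2 : (2:ℝ) ≤ u := by
    have : Real.sqrt 4 ≤ u := Real.sqrt_le_sqrt h4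
    rwa [show (4:ℝ) = 2^2 by norm_num, Real.sqrt_sq (by norm_num)] at this
  set d := (u + s) ^ 2 - 1 with hd
  have hd3 : (3:ℝ) ≤ d := by nlinarith
  have hdpos : (0:ℝ) < d := by linarith
  have hdne : d ≠ 0 := ne_of_gt hdpos
  have hy : Fs s x = 1 - 3 / d := rfl
  have hy0 : 0 ≤ Fs s x := by
    rw [hy]
    have : 3 / d ≤ 1 := by rw [div_le_one hdpos]; linarith
    linarith
  have hy1 : Fs s x < 1 := by
    rw [hy]
    have : 0 < 3 / d := by positivity
    linarith
  refine ⟨⟨hy0, hy1⟩, ?_⟩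
  have hkey : (4 - Fs s x) / (1 - Fs s x) = (u + s) ^ 2 := by
    rw [hy]
    field_simp
    ring
  have hsqrt : Real.sqrt ((4 - Fs s x) / (1 - Fs s x)) = u + s := by
    rw [hkey, Real.sqrt_sq (by positivity)]
  show 1 - 3 / ((Real.sqrt ((4 - Fs s x) / (1 - Fs s x)) + t) ^ 2 - 1)
      = 1 - 3 / ((u + (s + t)) ^ 2 - 1)
  rw [hsqrt]
  ring_nf
end

section
/- Let θ : ℕ → ℝ be a sequence with θ(k) ≥ 0 for all k, such that for every x ∈ [0,1) the series ∑_{k≥0} θ(k)·x^k converges with sum equal to 1 - 3/((√((4-x)/(1-x)) + 1)² - 1). Then the series ∑_{k≥0} k·θ(k) converges and ∑_{k≥0} k·θ(k) = 1, i.e. θ has mean 1 (it is a critical offspring distribution). -/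
/-!
The generating function is `g(x) = 1 - (1 - x) q(x)` with
`q(x) = 3 / (4 - x + 2 √((1 - x)(4 - x)))`, which is continuous at `1` with `q(1) = 1`.
As the coefficients are nonnegative, letting `x → 1⁻` in `∑ θₖ xᵏ = g(x)` gives `∑ θₖ = 1`
(monotone convergence), and then letting `x → 1⁻` in
`∑ θₖ (1 + x + ⋯ + xᵏ⁻¹) = (1 - g(x)) / (1 - x) = q(x)` gives `∑ k θₖ = q(1) = 1`.
-/

open Filter Topology Finset

theorem hasSum_of_tendsto_of_le {ι α : Type*} {l : Filter α} [l.NeBot] {u : ι → α → ℝ}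
    {c : ι → ℝ} {f : α → ℝ} {L : ℝ} (hu0 : ∀ᶠ x in l, ∀ i, 0 ≤ u i x)
    (huc : ∀ᶠ x in l, ∀ i, u i x ≤ c i) (hlim : ∀ i, Tendsto (u i) l (𝓝 (c i)))
    (hf : ∀ᶠ x in l, HasSum (fun i ↦ u i x) (f x)) (hL : Tendsto f l (𝓝 L)) :
    HasSum c L := by
  have hc0 : 0 ≤ c := fun i ↦ ge_of_tendsto (hlim i) (hu0.mono fun x hx ↦ hx i)
  have hpartial : ∀ s : Finset ι, ∑ i ∈ s, c i ≤ L := fun s ↦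
    le_of_tendsto_of_tendsto (tendsto_finsetSum s fun i _ ↦ hlim i) hL <|
      (hu0.and hf).mono fun x ⟨h0, hx⟩ ↦ sum_le_hasSum s (fun i _ ↦ h0 i) hx
  have hc : Summable c := summable_of_sum_le hc0 hpartial
  have hge : L ≤ ∑' i, c i := le_of_tendsto hL <|
    (huc.and hf).mono fun x ⟨hle, hx⟩ ↦ hasSum_le hle hx hc.hasSum
  exact (le_antisymm (Real.tsum_le_of_sum_le hc0 hpartial) hge) ▸ hc.hasSum

theorem hasSum_mul_geom_sum {a : ℕ → ℝ} {A B x : ℝ} (hx : x ≠ 1) (ha : HasSum a A)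
    (hax : HasSum (fun k ↦ a k * x ^ k) B) :
    HasSum (fun k ↦ a k * ∑ i ∈ range k, x ^ i) ((A - B) / (1 - x)) := by
  have h1x : 1 - x ≠ 0 := sub_ne_zero.mpr hx.symm
  rw [← hasSum_mul_left_iff h1x, mul_div_cancel₀ _ h1x]
  refine (ha.sub hax).congr_fun fun k ↦ ?_
  linear_combination -a k * geom_sum_mul x k

theorem three_div_sq_sub_one_eq {x : ℝ} (hx : x < 1) :
    3 / ((√((4 - x) / (1 - x)) + 1) ^ 2 - 1) =
      (1 - x) * (3 / (4 - x + 2 * √((1 - x) * (4 - x)))) := by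
  have h1x : 0 < 1 - x := by linarith
  have h4x : 0 < 4 - x := by linarith
  set s := √((4 - x) / (1 - x))
  have hs : 0 < s := Real.sqrt_pos.mpr (by positivity)
  have hs2 : (1 - x) * s ^ 2 = 4 - x := by
    rw [Real.sq_sqrt (by positivity)]; field_simp
  have hmul : √((1 - x) * (4 - x)) = (1 - x) * s := by
    rw [← Real.sqrt_sq h1x.le, ← Real.sqrt_mul (sq_nonneg _), Real.sqrt_sq h1x.le]
    congr 1; field_simp
  have hD : 4 - x + 2 * √((1 - x) * (4 - x)) = (1 - x) * ((s + 1) ^ 2 - 1) := by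
    rw [hmul]; linear_combination -hs2
  rw [hD]; field_simp

theorem tendsto_three_div_nhdsLT_one :
    Tendsto (fun x : ℝ ↦ 3 / (4 - x + 2 * √((1 - x) * (4 - x)))) (𝓝[<] 1) (𝓝 1) := by
  have hcont : Continuous fun x : ℝ ↦ 4 - x + 2 * √((1 - x) * (4 - x)) := by fun_prop
  have h : ContinuousAt (fun x : ℝ ↦ 3 / (4 - x + 2 * √((1 - x) * (4 - x)))) 1 :=
    continuousAt_const.div hcont.continuousAt (by norm_num)
  convert h.tendsto.mono_left nhdsWithin_le_nhds using 2
  norm_num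

theorem hasSum_of_tendsto_powerSeries {a : ℕ → ℝ} {f : ℝ → ℝ} {L : ℝ} (ha : ∀ k, 0 ≤ a k)
    (hf : ∀ x ∈ Set.Ico (0 : ℝ) 1, HasSum (fun k ↦ a k * x ^ k) (f x))
    (hL : Tendsto f (𝓝[<] 1) (𝓝 L)) : HasSum a L := by
  have hIco : ∀ᶠ x in 𝓝[<] (1 : ℝ), x ∈ Set.Ico 0 1 := Ico_mem_nhdsLT one_pos
  refine hasSum_of_tendsto_of_le (u := fun (k : ℕ) (x : ℝ) ↦ a k * x ^ k)
    (hIco.mono fun x hx k ↦ mul_nonneg (ha k) (pow_nonneg hx.1 k))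
    (hIco.mono fun x hx k ↦ mul_le_of_le_one_right (ha k) (pow_le_one₀ hx.1 hx.2.le))
    (fun k ↦ ?_) (hIco.mono hf) hL
  simpa using (((continuous_pow k).tendsto 1).mono_left nhdsWithin_le_nhds).const_mul (a k)

theorem hasSum_natCast_mul_of_tendsto {a : ℕ → ℝ} {q : ℝ → ℝ} {m : ℝ} (ha : ∀ k, 0 ≤ a k)
    (hf : ∀ x ∈ Set.Ico (0 : ℝ) 1, HasSum (fun k ↦ a k * x ^ k) (1 - (1 - x) * q x))
    (hq : Tendsto q (𝓝[<] 1) (𝓝 m)) : HasSum (fun k : ℕ ↦ (k : ℝ) * a k) m := by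
  have hIco : ∀ᶠ x in 𝓝[<] (1 : ℝ), x ∈ Set.Ico 0 1 := Ico_mem_nhdsLT one_pos
  have hsub : Tendsto (fun x : ℝ ↦ 1 - x) (𝓝[<] 1) (𝓝 0) := by
    simpa using ((continuous_sub_left (1 : ℝ)).tendsto 1).mono_left nhdsWithin_le_nhds
  have ha1 : HasSum a 1 :=
    hasSum_of_tendsto_powerSeries ha hf (by simpa using (hsub.mul hq).const_sub 1)
  refine hasSum_of_tendsto_of_le (u := fun (k : ℕ) (x : ℝ) ↦ a k * ∑ i ∈ range k, x ^ i)
    (hIco.mono fun x hx k ↦ mul_nonneg (ha k) (sum_nonneg fun i _ ↦ pow_nonneg hx.1 i))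
    (hIco.mono fun x hx k ↦ ?_) (fun k ↦ ?_) (hIco.mono fun x hx ↦ ?_) hq
  · rw [mul_comm]
    refine mul_le_mul_of_nonneg_right ?_ (ha k)
    simpa using sum_le_card_nsmul (range k) _ 1 fun i _ ↦ pow_le_one₀ hx.1 hx.2.le
  · have hcont : Continuous fun x : ℝ ↦ a k * ∑ i ∈ range k, x ^ i := by fun_prop
    simpa [mul_comm] using (hcont.tendsto 1).mono_left nhdsWithin_le_nhds
  · convert hasSum_mul_geom_sum hx.2.ne ha1 (hf x hx) using 1
    field_simp [sub_ne_zero.mpr hx.2.ne']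
    ring

theorem stmt_4 (θ : ℕ → ℝ) (hnn : ∀ k, 0 ≤ θ k)
    (hgen : ∀ x ∈ Set.Ico (0 : ℝ) 1,
      HasSum (fun k : ℕ => θ k * x ^ k)
        (1 - 3 / ((Real.sqrt ((4 - x) / (1 - x)) + 1) ^ 2 - 1))) :
    HasSum (fun k : ℕ => (k : ℝ) * θ k) 1 :=
  hasSum_natCast_mul_of_tendsto hnn (fun x hx ↦ three_div_sq_sub_one_eq hx.2 ▸ hgen x hx)
    tendsto_three_div_nhdsLT_one
end

section
/- Let C : ℕ → ℝ be a sequence with C(0) = 0 such that for every z ∈ (0,1/4) the series ∑_{p≥1} C(p)·z^p converges with sum (3/2)·z/√(π·(1-z)·(1-4z)³). Then for every x ∈ (0,1), the series ∑_{k≥1} (2√π·4^{-k}·C(k)/k)·x^k converges with sum √((4-x)/(1-x)) - 2. -/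
/-!
Dividing the generating function of `C` by `z` and integrating termwise from `0` gives
`∑ C(k)/k·z^k = ∫₀^z (3/2) dt / √(π (1-t) (1-4t)³)`, and this integrand is `π^{-1/2}` times the
derivative of `√((1-t)/(1-4t))`, which equals `1` at `t = 0`. Hence
`√π ∑ C(k)/k·z^k = √((1-z)/(1-4z)) - 1`, and the substitution `x = 4z` gives the claim. Instead of
integrating, both sides are compared on `[0, z]` by the mean value theorem.
-/

open Set Real

section PowerSeries

variable {a : ℕ → ℝ}

lemma div_natCast_mul_zero_pow (c : ℝ) (n : ℕ) : c / n * (0 : ℝ) ^ n = 0 := by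
  rcases n with _ | n <;> simp

lemma summable_div_mul_pow {t : ℝ} (h : Summable fun n => a n * t ^ n) :
    Summable fun n => a n / n * t ^ n := by
  refine h.norm.of_norm_bounded fun n => ?_
  rcases n.eq_zero_or_pos with rfl | hn
  · simp
  · rw [div_mul_eq_mul_div, norm_div, Real.norm_natCast]
    exact div_le_self (norm_nonneg _) (by exact_mod_cast hn)

lemma HasSum.coeff_succ_mul_pow {t S : ℝ} (h : HasSum (fun n => a n * t ^ n) S) (ha : a 0 = 0)
    (ht : t ≠ 0) : HasSum (fun n => a (n + 1) * t ^ n) (S / t) := by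
  have h₁ := ((hasSum_nat_add_iff' 1).mpr h).div_const t
  simp only [Finset.sum_range_one, ha, zero_mul, sub_zero] at h₁
  have hterm : ∀ n, a (n + 1) * t ^ (n + 1) / t = a (n + 1) * t ^ n := fun n => by
    rw [pow_succ, ← mul_assoc, mul_div_cancel_right₀ _ ht]
  simpa only [hterm] using h₁

lemma hasDerivAt_tsum_div_mul_pow {R : ℝ} (ha : ∀ t ∈ Ioo 0 R, Summable fun n => a n * t ^ n)
    {x : ℝ} (hx : |x| < R) :
    HasDerivAt (fun t => ∑' n, a n / n * t ^ n) (∑' n, a (n + 1) * x ^ n) x := by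
  obtain ⟨b, hxb, hbR⟩ := exists_between hx
  have hb : 0 < b := (abs_nonneg x).trans_lt hxb
  let g' : ℕ → ℝ → ℝ := fun n t => a n / n * (n * t ^ (n - 1))
  have hu : Summable fun n => ‖a n * b ^ n‖ / b :=
    (ha b ⟨hb, hbR⟩).norm.div_const b
  have hg'_succ : ∀ n t, g' (n + 1) t = a (n + 1) * t ^ n := by
    intro n t
    have hn : (n + 1 : ℝ) ≠ 0 := by positivity
    simp only [g', Nat.add_sub_cancel, Nat.cast_succ]
    field_simp
  have hg' : ∀ n, ∀ t ∈ Ioo (-b) b, ‖g' n t‖ ≤ ‖a n * b ^ n‖ / b := by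
    intro n t ht
    have htb : |t| ≤ b := abs_le.2 ⟨ht.1.le, ht.2.le⟩
    rcases n with _ | n
    · simp only [g', CharP.cast_eq_zero, div_zero, zero_mul, norm_zero]
      positivity
    · calc ‖g' (n + 1) t‖ = |a (n + 1)| * |t| ^ n := by
            rw [hg'_succ, norm_mul, norm_pow, Real.norm_eq_abs, Real.norm_eq_abs]
        _ ≤ |a (n + 1)| * b ^ n := by gcongr
        _ = ‖a (n + 1) * b ^ (n + 1)‖ / b := by
            rw [norm_mul, norm_pow, Real.norm_eq_abs, Real.norm_eq_abs, abs_of_pos hb, pow_succ]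
            field_simp
  have hzero : Summable fun n => a n / n * (0 : ℝ) ^ n := by
    simpa only [div_natCast_mul_zero_pow] using summable_zero
  have hxs : x ∈ Ioo (-b) b := ⟨by linarith [neg_abs_le x], (le_abs_self x).trans_lt hxb⟩
  have hderiv := hasDerivAt_tsum_of_isPreconnected hu isOpen_Ioo isPreconnected_Ioo
    (fun n t _ => (hasDerivAt_pow n t).const_mul (a n / n)) hg'
    (show (0 : ℝ) ∈ Ioo (-b) b by constructor <;> linarith) hzero hxs
  refine hderiv.congr_deriv ?_
  change ∑' n, g' n x = _
  rw [(hu.of_norm_bounded fun n => hg' n x hxs).tsum_eq_zero_add]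
  simp [g', hg'_succ]

end PowerSeries

lemma hasDerivAt_sqrt_one_sub_div_one_sub_four_mul {t : ℝ} (ht : t < 1 / 4) :
    HasDerivAt (fun s => √((1 - s) / (1 - 4 * s))) (3 / 2 / √((1 - t) * (1 - 4 * t) ^ 3)) t := by
  have hA : 0 < 1 - t := by linarith
  have hB : 0 < 1 - 4 * t := by linarith
  have hnum : HasDerivAt (fun s => 1 - s) (-1) t := by
    simpa using (hasDerivAt_id t).const_sub 1
  have hden : HasDerivAt (fun s => 1 - 4 * s) (-4) t := by
    simpa using ((hasDerivAt_id t).const_mul 4).const_sub 1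
  have hq : HasDerivAt (fun s => (1 - s) / (1 - 4 * s)) (3 / (1 - 4 * t) ^ 2) t :=
    (hnum.div hden hB.ne').congr_deriv (by ring)
  convert hq.sqrt (div_pos hA hB).ne' using 1
  have hsplit : (1 - t) * (1 - 4 * t) ^ 3 = (1 - t) / (1 - 4 * t) * ((1 - 4 * t) ^ 2) ^ 2 := by
    field_simp
  have hroot : 0 < √((1 - t) / (1 - 4 * t)) := Real.sqrt_pos.2 (div_pos hA hB)
  rw [hsplit, Real.sqrt_mul (div_pos hA hB).le, Real.sqrt_sq (by positivity)]
  field_simp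

lemma sub_eq_sub_of_hasDerivAt_eq {f g f' : ℝ → ℝ} {a b : ℝ} (hab : a < b)
    (hf : ContinuousOn f (Icc a b)) (hg : ContinuousOn g (Icc a b))
    (hf' : ∀ t ∈ Ioo a b, HasDerivAt f (f' t) t) (hg' : ∀ t ∈ Ioo a b, HasDerivAt g (f' t) t) :
    f b - g b = f a - g a := by
  obtain ⟨c, -, hc⟩ := exists_hasDerivAt_eq_slope (fun t => f t - g t) (fun _ => 0) hab
    (hf.sub hg) fun t ht => ((hf' t ht).sub (hg' t ht)).congr_deriv (sub_self _)
  have := (div_eq_zero_iff.1 hc.symm).resolve_right (sub_ne_zero.2 hab.ne')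
  linarith

lemma sqrt_pi_mul_tsum_succ_mul_pow {C : ℕ → ℝ} (hC0 : C 0 = 0) {t : ℝ} (ht : t ∈ Ioo 0 (1 / 4))
    (h : HasSum (fun n => C n * t ^ n) (3 / 2 * t / √(π * (1 - t) * (1 - 4 * t) ^ 3))) :
    √π * ∑' n, C (n + 1) * t ^ n = 3 / 2 / √((1 - t) * (1 - 4 * t) ^ 3) := by
  obtain ⟨ht0, ht14⟩ := ht
  have : 0 < √π := sqrt_pos.2 pi_pos
  have : 0 < √((1 - t) * (1 - 4 * t) ^ 3) :=
    sqrt_pos.2 (mul_pos (by linarith) (pow_pos (by linarith) 3))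
  rw [(h.coeff_succ_mul_pow hC0 ht0.ne').tsum_eq, mul_assoc π, sqrt_mul pi_pos.le]
  field_simp

lemma sqrt_pi_mul_tsum_div_mul_pow {C : ℕ → ℝ} (hC0 : C 0 = 0)
    (hgen : ∀ z ∈ Ioo (0 : ℝ) (1 / 4),
      HasSum (fun p => C p * z ^ p) (3 / 2 * z / √(π * (1 - z) * (1 - 4 * z) ^ 3)))
    {z : ℝ} (hz : z ∈ Ioo 0 (1 / 4)) :
    √π * ∑' n, C n / n * z ^ n = √((1 - z) / (1 - 4 * z)) - 1 := by
  obtain ⟨hz0, hz14⟩ := hz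
  have hP : ∀ t, |t| < 1 / 4 →
      HasDerivAt (fun t => √π * ∑' n, C n / n * t ^ n) (√π * ∑' n, C (n + 1) * t ^ n) t :=
    fun t ht => (hasDerivAt_tsum_div_mul_pow (fun s hs => (hgen s hs).summable) ht).const_mul _
  have hG : ∀ t < 1 / 4, HasDerivAt (fun s => √((1 - s) / (1 - 4 * s)))
      (3 / 2 / √((1 - t) * (1 - 4 * t) ^ 3)) t :=
    fun t => hasDerivAt_sqrt_one_sub_div_one_sub_four_mul
  have key := sub_eq_sub_of_hasDerivAt_eq hz0
    (fun t ht =>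
      (hP t (by rw [abs_of_nonneg ht.1]; linarith [ht.2])).continuousAt.continuousWithinAt)
    (fun t ht => (hG t (by linarith [ht.2])).continuousAt.continuousWithinAt)
    (fun t ht => by
      have ht' : t ∈ Ioo (0 : ℝ) (1 / 4) := ⟨ht.1, ht.2.trans hz14⟩
      rw [← sqrt_pi_mul_tsum_succ_mul_pow hC0 ht' (hgen t ht')]
      exact hP t (by rw [abs_of_pos ht.1]; exact ht'.2))
    (fun t ht => hG t (by linarith [ht.2]))
  simp only [div_natCast_mul_zero_pow, tsum_zero, mul_zero] at key
  norm_num at key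
  linarith

theorem stmt_8 (C : ℕ → ℝ) (hC0 : C 0 = 0)
    (hgen : ∀ z ∈ Set.Ioo (0 : ℝ) (1 / 4),
      HasSum (fun p : ℕ => C p * z ^ p)
        ((3 / 2) * z / Real.sqrt (Real.pi * (1 - z) * (1 - 4 * z) ^ 3))) :
    ∀ x ∈ Set.Ioo (0 : ℝ) 1,
      HasSum (fun k : ℕ => 2 * Real.sqrt Real.pi * (4 : ℝ) ^ (-(k : ℤ)) * C k / k * x ^ k)
        (Real.sqrt ((4 - x) / (1 - x)) - 2) := by
  intro x ⟨hx0, hx1⟩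
  set z := x / 4 with hz
  have hz' : z ∈ Ioo (0 : ℝ) (1 / 4) := ⟨by positivity, by linarith⟩
  have hsum : HasSum (fun n => C n / n * z ^ n) (∑' n, C n / n * z ^ n) :=
    (summable_div_mul_pow (hgen z hz').summable).hasSum
  have hterm : (fun k : ℕ => 2 * √π * (4 : ℝ) ^ (-(k : ℤ)) * C k / k * x ^ k)
      = fun k => 2 * √π * (C k / k * z ^ k) := by
    funext k
    rw [zpow_neg, zpow_natCast, hz, div_pow]
    field_simp
  have hvalue : √((4 - x) / (1 - x)) - 2 = 2 * √π * ∑' n, C n / n * z ^ n := by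
    have h4 : (4 - x) / (1 - x) = 2 ^ 2 * ((1 - z) / (1 - 4 * z)) := by
      rw [hz]; field_simp; ring
    rw [h4, sqrt_mul (by norm_num), sqrt_sq (by norm_num), mul_assoc,
      sqrt_pi_mul_tsum_div_mul_pow hC0 hgen hz']
    ring
  rw [hterm, hvalue]
  exact hsum.mul_left _
end

section
/- Let Z : ℕ → ℝ be a sequence such that for every z ∈ [0,1/4) the series ∑_{p≥0} Z(p)·z^p converges with sum (1 + 7z - 8z² + √((1-z)(1-4z)³)) / (2(1-z)). Define θ(k) = (1/8)·4^{1-k}·Z(k+1) for k ≥ 0. Then for every x ∈ [0,1), the series ∑_{k≥0} θ(k)·x^k converges with sum 1 - 3/((√((4-x)/(1-x)) + 1)² - 1). -/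
/-!
Substituting `z = x / 4` turns `∑ θ(k) xᵏ` into `(2 / x) (F(x / 4) - Z(0))`, where `F` is the
boundary generating function, and `Z(0) = F(0) = 1`. With `r = √((4 - x) / (1 - x))` one has
`√((1 - x/4)(1 - x)³) = (1 - x)² r / 2`, and the claimed closed form follows from
`r² (1 - x) = 4 - x`. At `x = 0` the series reduces to `θ(0)`, which is recovered as the limit
at `0⁺` of the power series, hence equals the value `5 / 8` of the closed form at `0`.
-/

open Filter Topology Set

theorem hasSum_mul_pow_zero (a : ℕ → ℝ) : HasSum (fun n => a n * 0 ^ n) (a 0) := by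
  simpa using hasSum_single (f := fun n => a n * (0 : ℝ) ^ n) 0 fun n hn => by simp [hn]

theorem HasSum.mul_pow_shift {a : ℕ → ℝ} {z s : ℝ} (h : HasSum (fun n => a n * z ^ n) s)
    (hz : z ≠ 0) : HasSum (fun n => a (n + 1) * z ^ n) ((s - a 0) / z) := by
  have htail := (hasSum_nat_add_iff' 1).mpr h
  simp only [Finset.range_one, Finset.sum_singleton, pow_zero, mul_one] at htail
  have hterm : (fun n => a (n + 1) * z ^ n) = fun n => a (n + 1) * z ^ (n + 1) / z :=
    funext fun n => by rw [pow_succ, ← mul_assoc, mul_div_cancel_right₀ _ hz]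
  rw [hterm]
  exact htail.div_const z

theorem tendsto_tsum_mul_pow_nhds_zero {a : ℕ → ℝ} {r : ℝ} (hr : 0 < r)
    (h : Summable fun n => a n * r ^ n) :
    Tendsto (fun x => ∑' n, a n * x ^ n) (𝓝 0) (𝓝 (a 0)) := by
  set p := FormalMultilinearSeries.ofScalars ℝ a
  have hradius : (r.toNNReal : ENNReal) ≤ p.radius := by
    refine p.le_radius_of_tendsto (l := 0) ?_
    simpa [p, FormalMultilinearSeries.ofScalars_norm, abs_mul, abs_of_pos hr, hr.le] using
      h.tendsto_atTop_zero.norm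
  have hcont : ContinuousAt (FormalMultilinearSeries.ofScalarsSum (E := ℝ) a) 0 :=
    p.continuousOn.continuousAt (Metric.isOpen_eball.mem_nhds
      (Metric.mem_eball_self ((by simpa using hr : (0 : ENNReal) < r.toNNReal).trans_le
        hradius)))
  have hlim := hcont.tendsto
  rw [FormalMultilinearSeries.ofScalarsSum_zero,
    FormalMultilinearSeries.ofScalarsSum_eq_tsum] at hlim
  simpa using hlim

theorem eq_of_hasSum_mul_pow_of_continuousAt {a : ℕ → ℝ} {f : ℝ → ℝ} {r : ℝ}
    (hr : 0 < r) (hf : ∀ x ∈ Ioo 0 r, HasSum (fun n => a n * x ^ n) (f x))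
    (hcont : ContinuousAt f 0) :
    a 0 = f 0 := by
  have hseries := tendsto_tsum_mul_pow_nhds_zero (half_pos hr)
    (hf _ ⟨half_pos hr, half_lt_self hr⟩).summable
  have heq : (fun x => ∑' n, a n * x ^ n) =ᶠ[𝓝[>] 0] f := by
    filter_upwards [Ioo_mem_nhdsGT hr] with x hx using (hf x hx).tsum_eq
  exact tendsto_nhds_unique (hseries.mono_left nhdsWithin_le_nhds |>.congr' heq)
    (hcont.tendsto.mono_left nhdsWithin_le_nhds)

noncomputable def eulerianGF (z : ℝ) : ℝ :=
  (1 + 7 * z - 8 * z ^ 2 + Real.sqrt ((1 - z) * (1 - 4 * z) ^ 3)) / (2 * (1 - z))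

noncomputable def offspringGF (x : ℝ) : ℝ :=
  1 - 3 / ((Real.sqrt ((4 - x) / (1 - x)) + 1) ^ 2 - 1)

noncomputable def offspringWeight (Z : ℕ → ℝ) (k : ℕ) : ℝ :=
  (1 / 8) * (4 : ℝ) ^ ((1 : ℤ) - (k : ℤ)) * Z (k + 1)

theorem eulerianGF_zero : eulerianGF 0 = 1 := by
  norm_num [eulerianGF]

theorem offspringGF_zero : offspringGF 0 = 5 / 8 := by
  norm_num [offspringGF]

theorem continuousAt_offspringGF_zero : ContinuousAt offspringGF 0 := by
  have hden : (Real.sqrt ((4 - 0) / (1 - 0)) + 1) ^ 2 - 1 ≠ 0 := by norm_num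
  unfold offspringGF
  refine continuousAt_const.sub (continuousAt_const.div ?_ hden)
  refine ((Real.continuous_sqrt.continuousAt.comp ?_).add continuousAt_const).pow 2 |>.sub
    continuousAt_const
  exact (continuousAt_const.sub continuousAt_id).div (continuousAt_const.sub continuousAt_id)
    (by norm_num)

theorem offspringGF_eq {x : ℝ} (hx : x ∈ Ioo (0 : ℝ) 1) :
    offspringGF x = 2 / x * (eulerianGF (x / 4) - 1) := by
  obtain ⟨hx0, hx1⟩ := hx
  rw [offspringGF, eulerianGF]
  set r := Real.sqrt ((4 - x) / (1 - x))
  have hr0 : 0 < r := Real.sqrt_pos.mpr (div_pos (by linarith) (by linarith))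
  have hr2 : r ^ 2 * (1 - x) = 4 - x := by
    rw [Real.sq_sqrt (div_pos (by linarith) (by linarith)).le]
    field_simp [(by linarith : (1 : ℝ) - x ≠ 0)]
  have hsqrt : Real.sqrt ((1 - x / 4) * (1 - 4 * (x / 4)) ^ 3) = (1 - x) ^ 2 / 2 * r := by
    rw [show (1 - x / 4) * (1 - 4 * (x / 4)) ^ 3 = ((1 - x) ^ 2 / 2) ^ 2 * ((4 - x) / (1 - x)) by
        field_simp [(by linarith : (1 : ℝ) - x ≠ 0)]; ring,
      Real.sqrt_mul (sq_nonneg _), Real.sqrt_sq (by positivity)]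
  have hden : (r + 1) ^ 2 - 1 ≠ 0 := by nlinarith
  rw [hsqrt]
  field_simp [(by linarith : (4 : ℝ) - x ≠ 0)]
  linear_combination (24 * x - 16 * r * (1 - x)) * hr2

theorem offspringWeight_mul_pow (Z : ℕ → ℝ) (k : ℕ) (x : ℝ) :
    offspringWeight Z k * x ^ k = 1 / 2 * (Z (k + 1) * (x / 4) ^ k) := by
  rw [offspringWeight, zpow_sub₀ (by norm_num), zpow_one, zpow_natCast, div_pow]
  field_simp
  ring

theorem hasSum_offspringWeight_mul_pow {Z : ℕ → ℝ}
    (hgen : ∀ z ∈ Ico (0 : ℝ) (1 / 4), HasSum (fun p => Z p * z ^ p) (eulerianGF z))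
    {x : ℝ} (hx : x ∈ Ioo (0 : ℝ) 1) :
    HasSum (fun k => offspringWeight Z k * x ^ k) (offspringGF x) := by
  have hZ0 : Z 0 = 1 := by
    simpa [eulerianGF_zero] using
      (hasSum_mul_pow_zero Z).unique (hgen 0 ⟨le_rfl, by norm_num⟩)
  have hshift := (hgen (x / 4) ⟨by linarith [hx.1], by linarith [hx.2]⟩).mul_pow_shift
    (by linarith [hx.1])
  have hvalue :
      2 / x * (eulerianGF (x / 4) - 1) = 1 / 2 * ((eulerianGF (x / 4) - Z 0) / (x / 4)) := by
    rw [hZ0]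
    field_simp
    ring
  rw [offspringGF_eq hx, hvalue, funext (offspringWeight_mul_pow Z · x)]
  exact hshift.mul_left _

theorem stmt_10 (Z : ℕ → ℝ)
    (hgen : ∀ z ∈ Set.Ico (0 : ℝ) (1 / 4),
      HasSum (fun p : ℕ => Z p * z ^ p)
        ((1 + 7 * z - 8 * z ^ 2 + Real.sqrt ((1 - z) * (1 - 4 * z) ^ 3)) / (2 * (1 - z)))) :
    ∀ x ∈ Set.Ico (0 : ℝ) 1,
      HasSum (fun k : ℕ => (1 / 8) * (4 : ℝ) ^ ((1 : ℤ) - (k : ℤ)) * Z (k + 1) * x ^ k)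
        (1 - 3 / ((Real.sqrt ((4 - x) / (1 - x)) + 1) ^ 2 - 1)) := by
  have hpos : ∀ x ∈ Ioo (0 : ℝ) 1,
      HasSum (fun k => offspringWeight Z k * x ^ k) (offspringGF x) :=
    fun _ => hasSum_offspringWeight_mul_pow hgen
  have hweight0 : offspringWeight Z 0 = offspringGF 0 :=
    eq_of_hasSum_mul_pow_of_continuousAt one_pos hpos continuousAt_offspringGF_zero
  intro x hx
  rcases hx.1.eq_or_lt with rfl | hx0
  · show HasSum (fun k => offspringWeight Z k * 0 ^ k) (offspringGF 0)
    rw [← hweight0]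
    exact hasSum_mul_pow_zero (offspringWeight Z)
  · exact hpos x ⟨hx0, hx.2⟩
end

section
/- Let C : ℕ → ℝ be a sequence with C(0) = 0 such that for every z ∈ (0,1/4) the series ∑_{p≥1} C(p)·z^p converges with sum (3/2)·z/√(π·(1-z)·(1-4z)³). Then 4^{-p}·p^{-1/2}·C(p) converges to √3/(2π) as p → ∞; equivalently, C(p) ~ (√3/(2π))·4^p·√p. -/
/-!
The generating function factors as `(3 / (2√π)) z (1 - z)^(-1/2) (1 - 4z)^(-3/2)`. Both factors
expand in central binomial coefficients, `(1 - 4t)^(-1/2) = ∑ centralBinom n tⁿ` (its square is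
`∑ 4ⁿ tⁿ` by a convolution identity) and `(1 - 4t)^(-3/2) = ∑ (2n + 1) centralBinom n tⁿ`, so
`C (n + 1) = (3 / (2√π)) ∑_{k + l = n} centralBinom k 4^(-k) (2l + 1) centralBinom l`.
By Stirling, `(2l + 1) centralBinom l 4^(-l) ~ 2 √(l / π)`, and `∑ centralBinom k 16^(-k) = 2 / √3`
converges, so dominated convergence gives `C p 4^(-p) p^(-1/2) → (3 / (8√π)) (2 / √3) (2 / √π)`.
-/

open Finset Finset.Nat Filter Topology Nat Real Stirling

theorem Finset.Nat.two_mul_sum_antidiagonal_fst_mul (f : ℕ → ℕ) (n : ℕ) :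
    2 * ∑ ij ∈ antidiagonal n, ij.1 * (f ij.1 * f ij.2)
      = n * ∑ ij ∈ antidiagonal n, f ij.1 * f ij.2 := by
  calc 2 * ∑ ij ∈ antidiagonal n, ij.1 * (f ij.1 * f ij.2)
      = ∑ ij ∈ antidiagonal n, ij.1 * (f ij.1 * f ij.2)
        + ∑ ij ∈ antidiagonal n, ij.2 * (f ij.1 * f ij.2) := by
        rw [two_mul, ← sum_antidiagonal_swap (f := fun ij => ij.2 * (f ij.1 * f ij.2))]
        congr 1
        exact sum_congr rfl fun ij _ => by simp only [Prod.fst_swap, Prod.snd_swap]; ring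
    _ = n * ∑ ij ∈ antidiagonal n, f ij.1 * f ij.2 := by
        rw [← sum_add_distrib, mul_sum]
        refine sum_congr rfl fun ij hij => ?_
        rw [← mem_antidiagonal.mp hij]
        ring

theorem Nat.sum_antidiagonal_centralBinom_mul (n : ℕ) :
    ∑ ij ∈ antidiagonal n, centralBinom ij.1 * centralBinom ij.2 = 4 ^ n := by
  induction n with
  | zero => simp
  | succ n ih =>
    refine Nat.eq_of_mul_eq_mul_left n.succ_pos ?_
    calc (n + 1) * ∑ ij ∈ antidiagonal (n + 1), centralBinom ij.1 * centralBinom ij.2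
        = 2 * ∑ ij ∈ antidiagonal n, (ij.1 + 1) * centralBinom (ij.1 + 1) * centralBinom ij.2 := by
          rw [← two_mul_sum_antidiagonal_fst_mul, sum_antidiagonal_succ]
          simp [mul_assoc]
      _ = 4 * (2 * ∑ ij ∈ antidiagonal n, ij.1 * (centralBinom ij.1 * centralBinom ij.2)
            + ∑ ij ∈ antidiagonal n, centralBinom ij.1 * centralBinom ij.2) := by
          simp only [succ_mul_centralBinom_succ, mul_sum, ← sum_add_distrib]
          exact sum_congr rfl fun _ _ => by ring
      _ = (n + 1) * 4 ^ (n + 1) := by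
          rw [two_mul_sum_antidiagonal_fst_mul, ih]
          ring

theorem Nat.sum_antidiagonal_four_pow_mul_centralBinom (n : ℕ) :
    ∑ ij ∈ antidiagonal n, 4 ^ ij.1 * centralBinom ij.2 = (2 * n + 1) * centralBinom n := by
  induction n with
  | zero => simp
  | succ n ih =>
    have h := succ_mul_centralBinom_succ n
    rw [sum_antidiagonal_succ]
    simp only [pow_succ, mul_assoc, mul_comm _ 4, ← mul_sum, ih]
    rw [pow_zero, one_mul]
    linarith

theorem HasSum.mul_antidiagonal_pow {a b : ℕ → ℝ} {t A B : ℝ}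
    (ha : HasSum (fun n => a n * t ^ n) A) (hb : HasSum (fun n => b n * t ^ n) B) :
    HasSum (fun n => (∑ ij ∈ antidiagonal n, a ij.1 * b ij.2) * t ^ n) (A * B) := by
  have ha' := summable_norm_iff.mpr ha.summable
  have hb' := summable_norm_iff.mpr hb.summable
  have hprod := (summable_norm_sum_mul_antidiagonal_of_summable_norm ha' hb').of_norm.hasSum
  rw [← tsum_mul_tsum_eq_tsum_sum_antidiagonal_of_summable_norm ha' hb', ha.tsum_eq,
    hb.tsum_eq] at hprod
  refine hprod.congr_fun fun n => ?_
  rw [sum_mul]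
  refine sum_congr rfl fun ij hij => ?_
  rw [← mem_antidiagonal.mp hij, pow_add]
  ring

theorem hasSum_four_pow_mul_pow {t : ℝ} (ht0 : 0 ≤ t) (ht : t < 1 / 4) :
    HasSum (fun n => (4 : ℝ) ^ n * t ^ n) (1 - 4 * t)⁻¹ := by
  simpa only [mul_pow] using hasSum_geometric_of_lt_one (r := 4 * t) (by positivity) (by linarith)

theorem hasSum_centralBinom_mul_pow {t : ℝ} (ht0 : 0 ≤ t) (ht : t < 1 / 4) :
    HasSum (fun n => (centralBinom n : ℝ) * t ^ n) (√(1 - 4 * t))⁻¹ := by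
  have hgeo := hasSum_four_pow_mul_pow ht0 ht
  have hsum : Summable fun n => (centralBinom n : ℝ) * t ^ n :=
    hgeo.summable.of_nonneg_of_le (fun n => by positivity) fun n => by
      gcongr; exact_mod_cast centralBinom_le_four_pow n
  have hsq : (∑' n, (centralBinom n : ℝ) * t ^ n) * ∑' n, (centralBinom n : ℝ) * t ^ n
      = (1 - 4 * t)⁻¹ := by
    refine (hsum.hasSum.mul_antidiagonal_pow hsum.hasSum).unique ?_
    simpa only [← Nat.cast_mul, ← Nat.cast_sum, sum_antidiagonal_centralBinom_mul,
      Nat.cast_pow, Nat.cast_ofNat] using hgeo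
  rw [← sqrt_inv, ← hsq, sqrt_mul_self (tsum_nonneg fun n => by positivity)]
  exact hsum.hasSum

theorem hasSum_two_mul_add_one_mul_centralBinom_mul_pow {t : ℝ} (ht0 : 0 ≤ t) (ht : t < 1 / 4) :
    HasSum (fun n => (2 * n + 1) * (centralBinom n : ℝ) * t ^ n)
      ((1 - 4 * t)⁻¹ * (√(1 - 4 * t))⁻¹) := by
  refine ((hasSum_four_pow_mul_pow ht0 ht).mul_antidiagonal_pow
    (hasSum_centralBinom_mul_pow ht0 ht)).congr_fun fun n => ?_
  congr 1
  exact_mod_cast (sum_antidiagonal_four_pow_mul_centralBinom n).symm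

/-- Identity theorem for the power series `∑ (a - b) n zⁿ`, which vanishes on `(0, r)`. -/
theorem eq_of_hasSum_mul_pow {a b : ℕ → ℝ} {f : ℝ → ℝ} {r : ℝ} (hr : 0 < r)
    (ha : ∀ z ∈ Set.Ioo 0 r, HasSum (fun n => a n * z ^ n) (f z))
    (hb : ∀ z ∈ Set.Ioo 0 r, HasSum (fun n => b n * z ^ n) (f z)) : a = b := by
  set p := FormalMultilinearSeries.ofScalars ℝ (a - b)
  have hsub : ∀ z ∈ Set.Ioo 0 r, HasSum (fun n => (a - b) n * z ^ n) 0 := fun z hz => by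
    simpa only [Pi.sub_apply, sub_mul, sub_self] using (ha z hz).sub (hb z hz)
  obtain ⟨z, hz⟩ := Set.nonempty_Ioo.mpr hr
  have hrad : 0 < p.radius := by
    refine lt_of_lt_of_le ?_ (p.le_radius_of_tendsto (r := z.toNNReal) (l := 0) ?_)
    · simpa using hz.1
    · simpa [p, FormalMultilinearSeries.ofScalars_norm, abs_of_pos hz.1, hz.1.le] using
        (hsub z hz).summable.tendsto_atTop_zero.norm
  have hp := (p.hasFPowerSeriesOnBall hrad).hasFPowerSeriesAt
  have hzero : ∀ z ∈ Set.Ioo 0 r, p.sum z = 0 := fun z hz => by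
    simpa [p, FormalMultilinearSeries.sum, FormalMultilinearSeries.ofScalars_apply_eq, mul_comm]
      using (hsub z hz).tsum_eq
  have hfreq : ∃ᶠ z in 𝓝[≠] (0 : ℝ), p.sum z = 0 :=
    (Filter.Eventually.frequently (Filter.mem_of_superset (Ioo_mem_nhdsGT hr) hzero)).filter_mono
      (nhdsWithin_mono _ fun _ hz => ne_of_gt hz)
  rw [← sub_eq_zero, ← FormalMultilinearSeries.ofScalars_series_eq_zero (E := ℝ),
    ← hp.locally_zero_iff]
  exact hp.analyticAt.frequently_zero_iff_eventually_zero.mp hfreq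

noncomputable def boundaryCoeff : ℕ → ℝ
  | 0 => 0
  | n + 1 => 3 / (2 * √π) * ∑ ij ∈ antidiagonal n,
      (centralBinom ij.1 : ℝ) / 4 ^ ij.1 * ((2 * ij.2 + 1) * centralBinom ij.2)

theorem hasSum_boundaryCoeff {z : ℝ} (hz0 : 0 ≤ z) (hz : z < 1 / 4) :
    HasSum (fun p => boundaryCoeff p * z ^ p)
      ((3 / 2) * z / √(π * (1 - z) * (1 - 4 * z) ^ 3)) := by
  have hsqrt : HasSum (fun n => (centralBinom n : ℝ) / 4 ^ n * z ^ n) (√(1 - z))⁻¹ := by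
    convert hasSum_centralBinom_mul_pow (t := z / 4) (by positivity) (by linarith) using 1
    · ext n; rw [div_pow]; ring
    · ring_nf
  have hz1 : 0 < 1 - z := by linarith
  have hz4 : 0 < 1 - 4 * z := by linarith
  have hshift : HasSum (fun n => boundaryCoeff (n + 1) * z ^ (n + 1))
      (3 / (2 * √π) * z * ((√(1 - z))⁻¹ * ((1 - 4 * z)⁻¹ * (√(1 - 4 * z))⁻¹))) :=
    ((hsqrt.mul_antidiagonal_pow (hasSum_two_mul_add_one_mul_centralBinom_mul_pow hz0 hz)).mul_left
      (3 / (2 * √π) * z)).congr_fun fun n => by simp only [boundaryCoeff, pow_succ]; ring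
  have hval : 3 / (2 * √π) * z * ((√(1 - z))⁻¹ * ((1 - 4 * z)⁻¹ * (√(1 - 4 * z))⁻¹))
      = (3 / 2) * z / √(π * (1 - z) * (1 - 4 * z) ^ 3) := by
    rw [sqrt_mul (mul_nonneg pi_pos.le hz1.le), sqrt_mul pi_pos.le, pow_succ,
      sqrt_mul (sq_nonneg _), sqrt_sq hz4.le]
    have : 0 < √(1 - z) := sqrt_pos.mpr hz1
    have : 0 < √(1 - 4 * z) := sqrt_pos.mpr hz4
    field_simp
  simpa [hval, boundaryCoeff] using
    (hasSum_nat_add_iff (f := fun p => boundaryCoeff p * z ^ p) 1).mp hshift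

theorem stirlingSeq_two_mul_div_sq {n : ℕ} (hn : n ≠ 0) :
    stirlingSeq (2 * n) / stirlingSeq n ^ 2 = centralBinom n * √n / 4 ^ n := by
  have hfac : ((2 * n)! : ℝ) = centralBinom n * n ! * n ! := by
    rw [two_mul, centralBinom_eq_two_mul_choose, two_mul]
    exact_mod_cast (add_choose_mul_factorial_mul_factorial n n).symm
  have hn0 : (0 : ℝ) < n := by positivity
  have h4 : √(2 * (2 * n : ℕ) : ℝ) = 2 * √n := by
    rw [show (2 * (2 * n : ℕ) : ℝ) = 2 ^ 2 * n by push_cast; ring, sqrt_mul (by positivity),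
      sqrt_sq zero_le_two]
  have hpow : ((2 * n : ℕ) / exp 1 : ℝ) ^ (2 * n) = 4 ^ n * ((n / exp 1) ^ n) ^ 2 := by
    rw [pow_mul, ← pow_mul _ n 2, mul_comm n 2, pow_mul, ← mul_pow]
    push_cast
    ring
  simp only [stirlingSeq, hfac, h4, hpow]
  field_simp
  rw [sq_sqrt (by positivity : (0 : ℝ) ≤ 2 * n), sq_sqrt hn0.le]
  ring

theorem tendsto_centralBinom_mul_sqrt_div_four_pow :
    Tendsto (fun n => centralBinom n * √n / 4 ^ n) atTop (𝓝 (1 / √π)) := by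
  have hπ : √π ≠ 0 := (sqrt_pos.mpr pi_pos).ne'
  have h := (tendsto_stirlingSeq_sqrt_pi.comp (tendsto_id.const_mul_atTop' two_pos)).div
    (tendsto_stirlingSeq_sqrt_pi.pow 2) (pow_ne_zero 2 hπ)
  rw [sq, div_mul_cancel_right₀ hπ] at h
  rw [one_div]
  refine h.congr' ?_
  filter_upwards [eventually_ne_atTop 0] with n hn
  exact stirlingSeq_two_mul_div_sq hn

theorem tendsto_sum_antidiagonal_mul_div {β a w : ℕ → ℝ} {L : ℝ}
    (hβ : Summable fun k => ‖β k‖) (ha : Tendsto (fun n => a n / w n) atTop (𝓝 L))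
    (hw0 : ∀ n, 0 < w n) (hw_mono : Monotone w)
    (hw : ∀ k, Tendsto (fun n => w n / w (n + k)) atTop (𝓝 1)) :
    Tendsto (fun n => (∑ ij ∈ antidiagonal n, β ij.1 * a ij.2) / w n) atTop
      (𝓝 ((∑' k, β k) * L)) := by
  obtain ⟨M, hM⟩ := ha.norm.bddAbove_range
  set F : ℕ → ℕ → ℝ := fun n k => if k ≤ n then β k * a (n - k) / w n else 0
  have hF : ∀ n, (∑ ij ∈ antidiagonal n, β ij.1 * a ij.2) / w n = ∑' k, F n k := by
    intro n
    rw [tsum_eq_sum (s := range (n + 1)) fun k hk => if_neg (by simpa using hk),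
      sum_antidiagonal_eq_sum_range_succ (fun k l => β k * a l), sum_div]
    exact sum_congr rfl fun k hk => (if_pos (by simpa [Nat.lt_succ_iff] using hk)).symm
  simp only [hF, ← tsum_mul_right]
  refine tendsto_tsum_of_dominated_convergence (bound := fun k => ‖β k‖ * M) (hβ.mul_right M)
    (fun k => ?_) (.of_forall fun n k => ?_)
  · rw [← tendsto_add_atTop_iff_nat k]
    have h := (ha.const_mul (β k)).mul (hw k)
    rw [mul_one] at h
    refine h.congr fun n => ?_
    simp only [F, Nat.le_add_left, if_true, Nat.add_sub_cancel]
    field_simp [(hw0 n).ne', (hw0 (n + k)).ne']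
  · simp only [F]
    split_ifs with hk
    · rw [norm_div, norm_mul, mul_div_assoc]
      gcongr
      calc ‖a (n - k)‖ / ‖w n‖ ≤ ‖a (n - k) / w (n - k)‖ := by
            rw [norm_div]
            gcongr
            · exact norm_pos_iff.mpr (hw0 _).ne'
            · rw [Real.norm_of_nonneg (hw0 _).le, Real.norm_of_nonneg (hw0 _).le]
              exact hw_mono (Nat.sub_le n k)
        _ ≤ M := hM ⟨n - k, rfl⟩
    · rw [norm_zero]
      exact mul_nonneg (norm_nonneg _) ((norm_nonneg _).trans (hM ⟨0, rfl⟩))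

theorem tendsto_two_mul_add_one_mul_centralBinom_div :
    Tendsto (fun n => (2 * n + 1) * centralBinom n / 4 ^ n / √((n : ℝ) + 1)) atTop
      (𝓝 (2 * (1 / √π))) := by
  -- by the recurrence, `(2n + 1) centralBinom n / 4ⁿ = 2 (n + 1) centralBinom (n + 1) / 4ⁿ⁺¹`
  refine (((tendsto_add_atTop_iff_nat 1).mpr tendsto_centralBinom_mul_sqrt_div_four_pow).const_mul
    2).congr fun n => ?_
  have hrec : ((n : ℝ) + 1) * centralBinom (n + 1) = 2 * (2 * n + 1) * centralBinom n := by
    exact_mod_cast succ_mul_centralBinom_succ n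
  have hs : 0 < √((n : ℝ) + 1) := sqrt_pos.mpr (by positivity)
  rw [eq_div_iff hs.ne']
  push_cast
  field_simp
  rw [sq_sqrt (by positivity), pow_succ]
  linear_combination 2 * 4 ^ n * hrec

theorem tendsto_sqrt_add_one_div_sqrt_add_one (k : ℕ) :
    Tendsto (fun n : ℕ => √((n : ℝ) + 1) / √(((n + k : ℕ) : ℝ) + 1)) atTop (𝓝 1) := by
  have h := ((tendsto_add_atTop_iff_nat 1).mpr (tendsto_natCast_div_add_atTop (k : ℝ))).sqrt
  rw [Real.sqrt_one] at h
  refine h.congr fun n => ?_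
  rw [sqrt_div (by positivity)]
  push_cast
  ring_nf

theorem tendsto_boundaryCoeff :
    Tendsto (fun p => boundaryCoeff p / (4 ^ p * √p)) atTop (𝓝 (√3 / (2 * π))) := by
  have hβ := hasSum_centralBinom_mul_pow (t := 1 / 16) (by norm_num) (by norm_num)
  have hconv := tendsto_sum_antidiagonal_mul_div (summable_norm_iff.mpr hβ.summable)
    tendsto_two_mul_add_one_mul_centralBinom_div (fun n => sqrt_pos.mpr (by positivity))
    (fun m n hmn => sqrt_le_sqrt (by gcongr)) tendsto_sqrt_add_one_div_sqrt_add_one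
  rw [hβ.tsum_eq] at hconv
  rw [← tendsto_add_atTop_iff_nat 1]
  have hlim : 3 / (8 * √π) * ((√(1 - 4 * (1 / 16)))⁻¹ * (2 * (1 / √π))) = √3 / (2 * π) := by
    rw [show (1 : ℝ) - 4 * (1 / 16) = 3 / 2 ^ 2 by norm_num, sqrt_div' _ (by positivity),
      sqrt_sq zero_le_two]
    field_simp
    rw [sq_sqrt pi_pos.le, sq_sqrt zero_le_three]
    ring
  rw [← hlim]
  refine (hconv.const_mul (3 / (8 * √π))).congr fun n => ?_
  rw [boundaryCoeff, Nat.cast_succ, mul_div_assoc, sum_div, sum_div, mul_sum, mul_sum]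
  refine sum_congr rfl fun ij hij => ?_
  rw [← mem_antidiagonal.mp hij, pow_succ, pow_add, one_div, inv_pow,
    show (16 : ℝ) = 4 * 4 by norm_num, mul_pow]
  have : 0 < √((ij.1 + ij.2 : ℕ) + 1 : ℝ) := sqrt_pos.mpr (by positivity)
  field_simp
  ring

theorem stmt_12_general (C : ℕ → ℝ)
    (hgen : ∀ z ∈ Set.Ioo (0 : ℝ) (1 / 4),
      HasSum (fun p : ℕ => C p * z ^ p)
        ((3 / 2) * z / Real.sqrt (Real.pi * (1 - z) * (1 - 4 * z) ^ 3))) :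
    Filter.Tendsto (fun p : ℕ => (4 : ℝ) ^ (-(p : ℤ)) * (p : ℝ) ^ (-(1 / 2) : ℝ) * C p)
      Filter.atTop (nhds (Real.sqrt 3 / (2 * Real.pi))) := by
  obtain rfl : C = boundaryCoeff := eq_of_hasSum_mul_pow (by norm_num) hgen
    fun z hz => hasSum_boundaryCoeff hz.1.le hz.2
  refine tendsto_boundaryCoeff.congr fun p => ?_
  rw [zpow_neg, zpow_natCast, rpow_neg p.cast_nonneg, ← sqrt_eq_rpow]
  ring

theorem stmt_12 (C : ℕ → ℝ) (hC0 : C 0 = 0)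
    (hgen : ∀ z ∈ Set.Ioo (0 : ℝ) (1 / 4),
      HasSum (fun p : ℕ => C p * z ^ p)
        ((3 / 2) * z / Real.sqrt (Real.pi * (1 - z) * (1 - 4 * z) ^ 3))) :
    Filter.Tendsto (fun p : ℕ => (4 : ℝ) ^ (-(p : ℤ)) * (p : ℝ) ^ (-(1 / 2) : ℝ) * C p)
      Filter.atTop (nhds (Real.sqrt 3 / (2 * Real.pi))) :=
  stmt_12_general C hgen
end

section
/- Let V be a type and let r : V → V → Prop be a relation such that for all u, v with r u v there exists w with r v w and r w u. Suppose x₀, x₁, …, x_n is a finite sequence of elements of V such that for every i < n, either r xᵢ xᵢ₊₁ or r xᵢ₊₁ xᵢ. Then there exist m ≤ 2n and a sequence y₀, y₁, …, y_m with y₀ = x₀, y_m = x_n, and r yᵢ yᵢ₊₁ for every i < m. In particular, in such a digraph the directed distance between any two vertices is at most twice the undirected distance. -/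
theorem stmt_16 {V : Type*} (r : V → V → Prop)
    (htri : ∀ u v, r u v → ∃ w, r v w ∧ r w u)
    (n : ℕ) (x : ℕ → V)
    (hx : ∀ i < n, r (x i) (x (i + 1)) ∨ r (x (i + 1)) (x i)) :
    ∃ m ≤ 2 * n, ∃ y : ℕ → V,
      y 0 = x 0 ∧ y m = x n ∧ ∀ i < m, r (y i) (y (i + 1)) := by
  induction n with
  | zero => exact ⟨0, le_refl 0, x, rfl, rfl, fun i hi => absurd hi (Nat.not_lt_zero i)⟩
  | succ n ih =>
    obtain ⟨m, hm, y, hy0, hyn, hyr⟩ := ih (fun i hi => hx i (Nat.lt_succ_of_lt hi))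
    rcases hx n (Nat.lt_succ_self n) with h | h
    · refine ⟨m + 1, by omega, fun i => if i ≤ m then y i else x (n + 1), ?_, ?_, ?_⟩
      · simp [hy0]
      · simp
      · intro i hi
        rcases Nat.lt_or_ge i m with hlt | hge
        · have : i + 1 ≤ m := hlt
          simp only [if_pos (le_of_lt hlt), if_pos this]
          exact hyr i hlt
        · have hi' : i = m := by omega
          subst hi'
          simp only [le_refl, if_pos, if_neg (by omega : ¬ i + 1 ≤ i), hyn]
          exact h
    · obtain ⟨w, hw1, hw2⟩ := htri _ _ h
      refine ⟨m + 2, by omega, fun i => if i ≤ m then y i else if i = m + 1 then w else x (n + 1),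
        ?_, ?_, ?_⟩
      · simp [hy0]
      · simp [show ¬ m + 2 ≤ m by omega, show m + 2 ≠ m + 1 by omega]
      · intro i hi
        rcases Nat.lt_or_ge i m with hlt | hge
        · have : i + 1 ≤ m := hlt
          simp only [if_pos (le_of_lt hlt), if_pos this]
          exact hyr i hlt
        · have hi' : i = m ∨ i = m + 1 := by omega
          rcases hi' with rfl | rfl
          · simp only [le_refl, if_pos, if_neg (by omega : ¬ i + 1 ≤ i),
              if_pos (rfl : i + 1 = i + 1), hyn]
            exact hw1
          · simp only [if_neg (by omega : ¬ m + 1 ≤ m), if_pos rfl,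
              if_neg (by omega : ¬ m + 1 + 1 ≤ m), if_neg (by omega : m + 1 + 1 ≠ m + 1)]
            exact hw2
end
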